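/- The last primal iterate v^k = u(x^k) of Algorithm (DFG) converges sublinearly at rate O(1/k): for all k ≥ 1, ‖v^k − u*‖ ≤ √(L_d/σ_f) · 2 R_d/(k+1), dist_K(G v^k + g) ≤ 2 L_d R_d/(k+1), and |f(v^k) − f*| ≤ (2 R_d + ‖x^0‖) · 2 L_d R_d/(k+1). -/

import Mathlib

/-!
The dual function `d` is concave with supergradient `-(G u(x)) - g`, and the quadratic growth of the
strongly convex Lagrangian around its minimiser `u(x)` gives the matching lower bound
`d z ≥ d x + ⟪∇d x, z - x⟫ - L_d / 2 ‖z - x‖²`. So (DFG) is FISTA for maximising `d` over `K*`, and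
the FISTA potential `θ_k² (d x* - d x^k) + L_d / 2 ‖θ_k x^k - (θ_k - 1) x^{k-1} - x*‖²` never
exceeds `L_d / 2 R_d²`. Since `θ_k ≥ (k + 1) / 2`, this bounds the dual gap by
`L_d / 2 (2 R_d / (k + 1))²` and keeps every `x^k` within `R_d` of `x*`. Strong convexity again turns the dual gap into
`σ_f / 2 ‖v^k - u*‖² ≤ f* - d x^k`; applying `G` gives feasibility, and the objective gap lies
between `⟪x*, G (u* - v^k)⟫` and `⟪x^k, G (v^k - u*)⟫`.
-/

open scoped RealInnerProductSpace
open Set Filter Topology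

section StrongConvexity

variable {E : Type*} [NormedAddCommGroup E] [NormedSpace ℝ E] {s t : Set E} {m : ℝ} {f : E → ℝ}

lemma StrongConvexOn.subset (hf : StrongConvexOn t m f) (hst : s ⊆ t) (hs : Convex ℝ s) :
    StrongConvexOn s m f :=
  ⟨hs, fun _ hx _ hy => hf.2 (hst hx) (hst hy)⟩

lemma StrongConvexOn.add_mul_sq_norm_sub_le_of_isMinOn {a x : E} (hf : StrongConvexOn s m f)
    (hmin : IsMinOn f s a) (ha : a ∈ s) (hx : x ∈ s) : f a + m / 2 * ‖x - a‖ ^ 2 ≤ f x := by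
  set C := m / 2 * ‖x - a‖ ^ 2
  have hgap : ∀ t ∈ Ioo (0 : ℝ) 1, f a + (1 - t) * C ≤ f x := by
    rintro t ⟨ht0, ht1⟩
    have hconv := hf.2 hx ha ht0.le (sub_nonneg.2 ht1.le) (add_sub_cancel t 1)
    have hle := isMinOn_iff.1 hmin _ (hf.1 hx ha ht0.le (sub_nonneg.2 ht1.le) (add_sub_cancel t 1))
    simp only [smul_eq_mul] at hconv
    refine le_of_mul_le_mul_left ?_ ht0
    linear_combination hle + hconv
  have hlim : Tendsto (fun t : ℝ => f a + (1 - t) * C) (𝓝[>] 0) (𝓝 (f a + C)) := by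
    have hcont : Continuous fun t : ℝ => f a + (1 - t) * C := by fun_prop
    simpa using (hcont.tendsto 0).mono_left nhdsWithin_le_nhds
  exact le_of_tendsto hlim (eventually_of_mem (Ioo_mem_nhdsGT one_pos) hgap)

end StrongConvexity

section Lagrangian

variable {E F : Type*} [NormedAddCommGroup E] [InnerProductSpace ℝ E]
  [NormedAddCommGroup F] [InnerProductSpace ℝ F]

def lagrangian (f : E → ℝ) (G : E →L[ℝ] F) (g : F) (u : E) (x : F) : ℝ :=
  f u + ⟪x, -(G u) - g⟫

variable {f : E → ℝ} {G : E →L[ℝ] F} {g : F} {U : Set E} {σ : ℝ}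

lemma lagrangian_eq_add_inner (u : E) (x z : F) :
    lagrangian f G g u z = lagrangian f G g u x + ⟪-(G u) - g, z - x⟫ := by
  simp only [lagrangian, inner_sub_right, real_inner_comm _ z, real_inner_comm _ x]
  ring

lemma lagrangian_eq_sub_inner (u : E) (x : F) :
    lagrangian f G g u x = f u - ⟪x, G u + g⟫ := by
  rw [lagrangian, neg_sub_left, inner_neg_right, sub_eq_add_neg, add_comm g]

lemma StrongConvexOn.lagrangian (hf : StrongConvexOn U σ f) (x : F) :
    StrongConvexOn U σ (lagrangian f G g · x) := by
  have hlin : ConvexOn ℝ U fun u => ⟪x, -(G u) - g⟫ := by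
    refine ⟨hf.1, fun u _ v _ a b _ _ hab => le_of_eq ?_⟩
    obtain rfl : b = 1 - a := by linarith
    simp only [map_add, map_smul, smul_eq_mul, inner_sub_right, inner_neg_right, inner_add_right,
      inner_smul_right]
    ring
  have h := hf.add (uniformConvexOn_zero.2 hlin)
  rwa [add_zero] at h

def dualFunction (f : E → ℝ) (G : E →L[ℝ] F) (g : F) (uu : F → E) (x : F) : ℝ :=
  lagrangian f G g (uu x) x

variable {uu : F → E}

lemma dualFunction_add_inner_le
    (huu : ∀ x, uu x ∈ U ∧ ∀ u ∈ U, lagrangian f G g (uu x) x ≤ lagrangian f G g u x)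
    {u : E} (hu : u ∈ U) (x : F) : dualFunction f G g uu x + ⟪x, G u + g⟫ ≤ f u := by
  have h := (huu x).2 u hu
  rw [lagrangian_eq_sub_inner (u := u)] at h
  rw [dualFunction]
  linarith

lemma dualFunction_add_inner_add_le (hf : StrongConvexOn U σ f)
    (huu : ∀ x, uu x ∈ U ∧ ∀ u ∈ U, lagrangian f G g (uu x) x ≤ lagrangian f G g u x)
    {u : E} (hu : u ∈ U) (x : F) :
    dualFunction f G g uu x + ⟪x, G u + g⟫ + σ / 2 * ‖u - uu x‖ ^ 2 ≤ f u := by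
  have h := (hf.lagrangian (G := G) (g := g) x).add_mul_sq_norm_sub_le_of_isMinOn
    (isMinOn_iff.2 (huu x).2) (huu x).1 hu
  rw [lagrangian_eq_sub_inner (u := u)] at h
  rw [dualFunction]
  linarith

lemma dualFunction_le_add_inner
    (huu : ∀ x, uu x ∈ U ∧ ∀ u ∈ U, lagrangian f G g (uu x) x ≤ lagrangian f G g u x) (x z : F) :
    dualFunction f G g uu z ≤ dualFunction f G g uu x + ⟪-(G (uu x)) - g, z - x⟫ :=
  ((huu z).2 _ (huu x).1).trans_eq (lagrangian_eq_add_inner _ _ _)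

lemma add_inner_sub_le_dualFunction (hσ : 0 < σ) (hf : StrongConvexOn U σ f)
    (huu : ∀ x, uu x ∈ U ∧ ∀ u ∈ U, lagrangian f G g (uu x) x ≤ lagrangian f G g u x) (x z : F) :
    dualFunction f G g uu x + ⟪-(G (uu x)) - g, z - x⟫ - ‖G‖ ^ 2 / σ / 2 * ‖z - x‖ ^ 2 ≤
      dualFunction f G g uu z := by
  set s := ‖uu z - uu x‖
  set r := ‖z - x‖
  have hgrowth : lagrangian f G g (uu x) x + σ / 2 * s ^ 2 ≤ lagrangian f G g (uu z) x :=
    (hf.lagrangian x).add_mul_sq_norm_sub_le_of_isMinOn (isMinOn_iff.2 (huu x).2) (huu x).1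
      (huu z).1
  have hshift : ⟪-(G (uu x)) - g, z - x⟫ - ⟪-(G (uu z)) - g, z - x⟫ = ⟪G (uu z - uu x), z - x⟫ := by
    rw [← inner_sub_left, map_sub]
    congr 1
    abel
  have hcs : ⟪G (uu z - uu x), z - x⟫ ≤ ‖G‖ * s * r :=
    (real_inner_le_norm _ _).trans (mul_le_mul_of_nonneg_right (G.le_opNorm _) (norm_nonneg _))
  have hamgm : ‖G‖ * s * r ≤ σ / 2 * s ^ 2 + ‖G‖ ^ 2 / σ / 2 * r ^ 2 := by
    have := sq_nonneg (σ * s - ‖G‖ * r)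
    field_simp
    nlinarith
  rw [dualFunction, dualFunction, lagrangian_eq_add_inner (uu z) x z]
  linarith

lemma norm_sub_le_of_dualFunction_gap (hσ : 0 < σ) (hf : StrongConvexOn U σ f)
    (huu : ∀ x, uu x ∈ U ∧ ∀ u ∈ U, lagrangian f G g (uu x) x ≤ lagrangian f G g u x)
    {u : E} (hu : u ∈ U) {x : F} (hx : 0 ≤ ⟪x, G u + g⟫) {L r : ℝ} (hr : 0 ≤ r)
    (hgap : f u - dualFunction f G g uu x ≤ L / 2 * r ^ 2) :
    ‖uu x - u‖ ≤ √(L / σ) * r := by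
  have h := dualFunction_add_inner_add_le hf huu hu x
  have hsq : ‖uu x - u‖ ^ 2 ≤ L / σ * r ^ 2 := by
    rw [norm_sub_rev, div_mul_eq_mul_div, le_div_iff₀ hσ]
    linarith
  rw [← Real.sqrt_sq hr, ← Real.sqrt_mul' _ (sq_nonneg r)]
  exact Real.le_sqrt_of_sq_le hsq

lemma abs_sub_le_mul_norm_of_dualFunction_eq
    (huu : ∀ x, uu x ∈ U ∧ ∀ u ∈ U, lagrangian f G g (uu x) x ≤ lagrangian f G g u x)
    {u : E} (hu : u ∈ U) {x xs : F} (hxs : dualFunction f G g uu xs = f u)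
    (hxsu : 0 ≤ ⟪xs, G u + g⟫) {B : ℝ} (hxB : ‖x‖ ≤ B) (hxsB : ‖xs‖ ≤ B) :
    |f (uu x) - f u| ≤ B * ‖G (uu x - u)‖ := by
  have hup : f (uu x) - f u ≤ ⟪x, G (uu x - u)⟫ := by
    have h := dualFunction_add_inner_le huu hu x
    rw [dualFunction, lagrangian_eq_sub_inner] at h
    rw [map_sub, show G (uu x) - G u = (G (uu x) + g) - (G u + g) by abel, inner_sub_right]
    linarith
  have hlow : f u - f (uu x) ≤ -⟪xs, G (uu x - u)⟫ := by
    have h := dualFunction_add_inner_le huu (huu x).1 xs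
    rw [map_sub, show G (uu x) - G u = (G (uu x) + g) - (G u + g) by abel, inner_sub_right]
    linarith
  have hnorm : ∀ z : F, ‖z‖ ≤ B → |⟪z, G (uu x - u)⟫| ≤ B * ‖G (uu x - u)‖ := fun z hz =>
    (abs_real_inner_le_norm _ _).trans (mul_le_mul_of_nonneg_right hz (norm_nonneg _))
  have h1 := (abs_le.1 (hnorm x hxB)).2
  have h2 := (abs_le.1 (hnorm xs hxsB)).1
  exact abs_le.2 ⟨by linarith, by linarith⟩

lemma norm_map_sub_le_of_dualFunction_gap (hσ : 0 < σ) (hf : StrongConvexOn U σ f)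
    (huu : ∀ x, uu x ∈ U ∧ ∀ u ∈ U, lagrangian f G g (uu x) x ≤ lagrangian f G g u x)
    {u : E} (hu : u ∈ U) {x : F} (hx : 0 ≤ ⟪x, G u + g⟫) {r : ℝ} (hr : 0 ≤ r)
    (hgap : f u - dualFunction f G g uu x ≤ ‖G‖ ^ 2 / σ / 2 * r ^ 2) :
    ‖G (uu x - u)‖ ≤ ‖G‖ ^ 2 / σ * r := by
  have hsqrt : ‖G‖ * √(‖G‖ ^ 2 / σ / σ) = ‖G‖ ^ 2 / σ := by
    rw [show ‖G‖ ^ 2 / σ / σ = (‖G‖ / σ) ^ 2 by ring, Real.sqrt_sq (by positivity)]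
    ring
  calc ‖G (uu x - u)‖ ≤ ‖G‖ * (√(‖G‖ ^ 2 / σ / σ) * r) :=
        (G.le_opNorm _).trans (mul_le_mul_of_nonneg_left
          (norm_sub_le_of_dualFunction_gap hσ hf huu hu hx hr hgap) (norm_nonneg G))
    _ = ‖G‖ ^ 2 / σ * r := by rw [← mul_assoc, hsqrt]

lemma infDist_le_norm_map_sub {K : Set F} {u : E} (hu : G u + g ∈ K) (v : E) :
    Metric.infDist (G v + g) K ≤ ‖G (v - u)‖ := by
  have h := Metric.infDist_le_dist_of_mem (x := G v + g) hu
  rwa [dist_add_right, dist_eq_norm, ← map_sub] at h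

end Lagrangian

section Projection

variable {F : Type*} [NormedAddCommGroup F] [InnerProductSpace ℝ F] {C : Set F}

lemma convex_setOf_forall_inner_nonneg [CompleteSpace F] (K : Set F) :
    Convex ℝ {x : F | ∀ v ∈ K, 0 ≤ ⟪x, v⟫} := by
  convert (ProperCone.innerDual K).convex using 1
  ext
  simp [real_inner_comm]

lemma inner_sub_le_zero_of_forall_norm_sub_le (hC : Convex ℝ C) {q p w : F} (hp : p ∈ C)
    (hmin : ∀ w ∈ C, ‖q - p‖ ≤ ‖q - w‖) (hw : w ∈ C) : ⟪q - p, w - p⟫ ≤ 0 := by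
  have : Nonempty C := ⟨⟨p, hp⟩⟩
  refine (norm_eq_iInf_iff_real_inner_le_zero hC hp).1 (le_antisymm ?_ ?_) w hw
  · exact le_ciInf fun w => hmin w w.2
  · exact ciInf_le ⟨0, forall_mem_range.2 fun w => norm_nonneg (q - (w : C))⟩ (⟨p, hp⟩ : C)

variable {d : F → ℝ} {D : F → F} {L : ℝ}

lemma sub_le_of_projected_gradient_step (hC : Convex ℝ C) (hL : 0 < L)
    (hup : ∀ a b, d b ≤ d a + ⟪D a, b - a⟫)
    (hlow : ∀ a b, d a + ⟪D a, b - a⟫ - L / 2 * ‖b - a‖ ^ 2 ≤ d b) {y p z : F} (hp : p ∈ C)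
    (hmin : ∀ w ∈ C, ‖y + (1 / L) • D y - p‖ ≤ ‖y + (1 / L) • D y - w‖) (hz : z ∈ C) :
    d z - d p ≤ L / 2 * (‖y - z‖ ^ 2 - ‖p - z‖ ^ 2) := by
  have hvi : ⟪D y, z - p⟫ ≤ L * ⟪p - y, z - p⟫ := by
    have h := mul_nonpos_of_nonneg_of_nonpos hL.le
      (inner_sub_le_zero_of_forall_norm_sub_le hC hp hmin hz)
    rw [← real_inner_smul_left, smul_sub, smul_add, smul_smul, mul_one_div_cancel hL.ne',
      one_smul] at h
    have e : L • y + D y - L • p = D y - L • (p - y) := by module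
    rwa [e, inner_sub_left, real_inner_smul_left, sub_nonpos] at h
  have hsq : ‖y - z‖ ^ 2 = ‖p - y‖ ^ 2 + 2 * ⟪p - y, z - p⟫ + ‖p - z‖ ^ 2 := by
    rw [show y - z = -((p - y) + (z - p)) by abel, norm_neg, norm_add_sq_real, norm_sub_rev z p]
  have hsplit : ⟪D y, z - y⟫ - ⟪D y, p - y⟫ = ⟪D y, z - p⟫ := by
    rw [← inner_sub_right, sub_sub_sub_cancel_right]
  linear_combination hup y z + hlow y p + hvi - L / 2 * hsq + hsplit

end Projection

section Fista

lemma fista_momentum_sq_sub_self (t : ℝ) :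
    ((1 + √(1 + 4 * t ^ 2)) / 2) ^ 2 - (1 + √(1 + 4 * t ^ 2)) / 2 = t ^ 2 := by
  linear_combination Real.sq_sqrt (by positivity : (0 : ℝ) ≤ 1 + 4 * t ^ 2) / 4

lemma add_half_le_fista_momentum (t : ℝ) : t + 1 / 2 ≤ (1 + √(1 + 4 * t ^ 2)) / 2 := by
  have : 2 * t ≤ √(1 + 4 * t ^ 2) := Real.le_sqrt_of_sq_le (by nlinarith)
  linarith

variable {θ : ℕ → ℝ}

lemma half_succ_le_fista_momentum (hθ1 : θ 1 = 1)
    (hθrec : ∀ k, 1 ≤ k → θ (k + 1) = (1 + √(1 + 4 * θ k ^ 2)) / 2) {k : ℕ} (hk : 1 ≤ k) :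
    ((k : ℝ) + 1) / 2 ≤ θ k := by
  induction k, hk using Nat.le_induction with
  | base => norm_num [hθ1]
  | succ k hk ih =>
    rw [hθrec k hk]
    push_cast
    linarith [add_half_le_fista_momentum (θ k)]

lemma one_le_fista_momentum (hθ1 : θ 1 = 1)
    (hθrec : ∀ k, 1 ≤ k → θ (k + 1) = (1 + √(1 + 4 * θ k ^ 2)) / 2) {k : ℕ} (hk : 1 ≤ k) :
    1 ≤ θ k := by
  have hk' : (1 : ℝ) ≤ k := by exact_mod_cast hk
  linarith [half_succ_le_fista_momentum hθ1 hθrec hk]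

variable {F : Type*} [NormedAddCommGroup F] [InnerProductSpace ℝ F] {d : F → ℝ} {L t : ℝ}

lemma norm_smul_sub_sub_sq (t : ℝ) (w a b : F) :
    ‖t • w - (t - 1) • a - b‖ ^ 2 + (t - 1) * ‖a - b‖ ^ 2 =
      t * (t - 1) * ‖w - a‖ ^ 2 + t * ‖w - b‖ ^ 2 := by
  simp only [← real_inner_self_eq_norm_sq, inner_sub_left, inner_sub_right,
    real_inner_smul_left, real_inner_smul_right]
  rw [real_inner_comm a w, real_inner_comm b w, real_inner_comm b a]
  ring

lemma fista_step_estimate (ht : 1 ≤ t) {y p a b : F}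
    (ha : d a - d p ≤ L / 2 * (‖y - a‖ ^ 2 - ‖p - a‖ ^ 2))
    (hb : d b - d p ≤ L / 2 * (‖y - b‖ ^ 2 - ‖p - b‖ ^ 2)) :
    t ^ 2 * (d b - d p) - (t ^ 2 - t) * (d b - d a) ≤
      L / 2 * (‖t • y - (t - 1) • a - b‖ ^ 2 - ‖t • p - (t - 1) • a - b‖ ^ 2) := by
  have hy := norm_smul_sub_sub_sq t y a b
  have hp := norm_smul_sub_sub_sq t p a b
  have h1 := mul_le_mul_of_nonneg_left ha (by nlinarith : 0 ≤ t * (t - 1))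
  have h2 := mul_le_mul_of_nonneg_left hb (by linarith : 0 ≤ t)
  linear_combination h1 + h2 + L / 2 * (hp - hy)

variable {C : Set F} {x y : ℕ → F} {xs : F}

theorem fista_potential_le (hθ1 : θ 1 = 1)
    (hθrec : ∀ k, 1 ≤ k → θ (k + 1) = (1 + √(1 + 4 * θ k ^ 2)) / 2)
    (hstep : ∀ k, 1 ≤ k → ∀ z ∈ C, d z - d (x k) ≤ L / 2 * (‖y k - z‖ ^ 2 - ‖x k - z‖ ^ 2))
    (hxC : ∀ k, x k ∈ C) (hxs : xs ∈ C) (hy1 : y 1 = x 0)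
    (hyrec : ∀ k, 1 ≤ k → y (k + 1) = x k + ((θ k - 1) / θ (k + 1)) • (x k - x (k - 1)))
    {k : ℕ} (hk : 1 ≤ k) :
    θ k ^ 2 * (d xs - d (x k)) + L / 2 * ‖θ k • x k - (θ k - 1) • x (k - 1) - xs‖ ^ 2 ≤
      L / 2 * ‖x 0 - xs‖ ^ 2 := by
  induction k, hk using Nat.le_induction with
  | base =>
    have h := hstep 1 le_rfl xs hxs
    rw [hy1] at h
    simp only [hθ1, sub_self, zero_smul, one_smul, sub_zero, one_pow, one_mul]
    linarith
  | succ k hk ih =>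
    have hθk1 := one_le_fista_momentum hθ1 hθrec (k.le_succ.trans' hk)
    have hθsq : θ (k + 1) ^ 2 - θ (k + 1) = θ k ^ 2 :=
      hθrec k hk ▸ fista_momentum_sq_sub_self (θ k)
    have hmomentum : θ (k + 1) • y (k + 1) - (θ (k + 1) - 1) • x k =
        θ k • x k - (θ k - 1) • x (k - 1) := by
      rw [hyrec k hk, smul_add, smul_smul, mul_div_cancel₀ _ (by linarith : θ (k + 1) ≠ 0)]
      module
    have h := fista_step_estimate hθk1 (hstep (k + 1) (by omega) (x k) (hxC k))
      (hstep (k + 1) (by omega) xs hxs)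
    rw [hmomentum, hθsq] at h
    rw [Nat.add_sub_cancel]
    linarith

theorem fista_norm_sub_le (hL : 0 < L) (hθ1 : θ 1 = 1)
    (hθrec : ∀ k, 1 ≤ k → θ (k + 1) = (1 + √(1 + 4 * θ k ^ 2)) / 2)
    (hstep : ∀ k, 1 ≤ k → ∀ z ∈ C, d z - d (x k) ≤ L / 2 * (‖y k - z‖ ^ 2 - ‖x k - z‖ ^ 2))
    (hxC : ∀ k, x k ∈ C) (hxs : xs ∈ C) (hmax : ∀ z ∈ C, d z ≤ d xs) (hy1 : y 1 = x 0)
    (hyrec : ∀ k, 1 ≤ k → y (k + 1) = x k + ((θ k - 1) / θ (k + 1)) • (x k - x (k - 1)))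
    (k : ℕ) : ‖x k - xs‖ ≤ ‖x 0 - xs‖ := by
  induction k with
  | zero => rfl
  | succ k ih =>
    set t := θ (k + 1)
    have ht := one_le_fista_momentum hθ1 hθrec (Nat.le_add_left 1 k)
    have hpot := fista_potential_le hθ1 hθrec hstep hxC hxs hy1 hyrec (Nat.le_add_left 1 k)
    rw [Nat.add_sub_cancel] at hpot
    have hw : ‖t • x (k + 1) - (t - 1) • x k - xs‖ ≤ ‖x 0 - xs‖ := by
      refine (pow_le_pow_iff_left₀ (norm_nonneg _) (norm_nonneg _) two_ne_zero).1 ?_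
      have := mul_nonneg (sq_nonneg t) (sub_nonneg.2 (hmax _ (hxC (k + 1))))
      nlinarith
    have htri : t * ‖x (k + 1) - xs‖ ≤
        ‖t • x (k + 1) - (t - 1) • x k - xs‖ + (t - 1) * ‖x k - xs‖ := by
      have e : t • (x (k + 1) - xs) =
          (t • x (k + 1) - (t - 1) • x k - xs) + (t - 1) • (x k - xs) := by module
      have := norm_add_le (t • x (k + 1) - (t - 1) • x k - xs) ((t - 1) • (x k - xs))
      rwa [← e, norm_smul_of_nonneg (by linarith), norm_smul_of_nonneg (by linarith)] at this
    nlinarith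

theorem fista_gap_le (hL : 0 ≤ L) (hθ1 : θ 1 = 1)
    (hθrec : ∀ k, 1 ≤ k → θ (k + 1) = (1 + √(1 + 4 * θ k ^ 2)) / 2)
    (hstep : ∀ k, 1 ≤ k → ∀ z ∈ C, d z - d (x k) ≤ L / 2 * (‖y k - z‖ ^ 2 - ‖x k - z‖ ^ 2))
    (hxC : ∀ k, x k ∈ C) (hxs : xs ∈ C) (hmax : ∀ z ∈ C, d z ≤ d xs) (hy1 : y 1 = x 0)
    (hyrec : ∀ k, 1 ≤ k → y (k + 1) = x k + ((θ k - 1) / θ (k + 1)) • (x k - x (k - 1)))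
    {k : ℕ} (hk : 1 ≤ k) :
    d xs - d (x k) ≤ L / 2 * (2 * ‖x 0 - xs‖ / ((k : ℝ) + 1)) ^ 2 := by
  have hpot := fista_potential_le hθ1 hθrec hstep hxC hxs hy1 hyrec hk
  have hθ := half_succ_le_fista_momentum hθ1 hθrec hk
  have hgap : 0 ≤ d xs - d (x k) := sub_nonneg.2 (hmax _ (hxC k))
  have hθsq : ((k : ℝ) + 1) ^ 2 ≤ 4 * θ k ^ 2 := by
    nlinarith [pow_le_pow_left₀ (by positivity) hθ 2]
  have hbound : θ k ^ 2 * (d xs - d (x k)) ≤ L / 2 * ‖x 0 - xs‖ ^ 2 := by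
    nlinarith [mul_nonneg hL (sq_nonneg ‖θ k • x k - (θ k - 1) • x (k - 1) - xs‖)]
  rw [div_pow, mul_div_assoc', le_div_iff₀ (by positivity)]
  nlinarith [mul_le_mul_of_nonneg_right hθsq hgap]

end Fista

theorem stmt_10_general {n p : ℕ}
    (f : EuclideanSpace ℝ (Fin n) → ℝ) (σf : ℝ) (hσf : 0 < σf)
    (hfsc : StrongConvexOn Set.univ σf f)
    (U : Set (EuclideanSpace ℝ (Fin n))) (hUcv : Convex ℝ U)
    (G : EuclideanSpace ℝ (Fin n) →L[ℝ] EuclideanSpace ℝ (Fin p)) (hG : G ≠ 0) (g : EuclideanSpace ℝ (Fin p))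
    (K : Set (EuclideanSpace ℝ (Fin p)))
    (Kstar : Set (EuclideanSpace ℝ (Fin p)))
    (hKstar : Kstar = {x : EuclideanSpace ℝ (Fin p) | ∀ v ∈ K, 0 ≤ ⟪x, v⟫})
    (Lag : EuclideanSpace ℝ (Fin n) → EuclideanSpace ℝ (Fin p) → ℝ)
    (hLag : ∀ u x, Lag u x = f u + ⟪x, -(G u) - g⟫)
    (uu : EuclideanSpace ℝ (Fin p) → EuclideanSpace ℝ (Fin n))
    (huu : ∀ x : EuclideanSpace ℝ (Fin p), uu x ∈ U ∧ ∀ u ∈ U, Lag (uu x) x ≤ Lag u x)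
    (d : EuclideanSpace ℝ (Fin p) → ℝ) (hd : ∀ x, d x = Lag (uu x) x)
    (ustar : EuclideanSpace ℝ (Fin n))
    (hustar : ustar ∈ U ∧ G ustar + g ∈ K ∧ ∀ u ∈ U, G u + g ∈ K → f ustar ≤ f u)
    (fstar : ℝ) (hfstar : fstar = f ustar)
    (Xstar : Set (EuclideanSpace ℝ (Fin p))) (hXstar : Xstar = {x ∈ Kstar | d x = fstar})
    (Ld : ℝ) (hLd : Ld = ‖G‖ ^ 2 / σf)
    (projKs : EuclideanSpace ℝ (Fin p) → EuclideanSpace ℝ (Fin p))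
    (hprojKs : ∀ z : EuclideanSpace ℝ (Fin p), projKs z ∈ Kstar ∧ ∀ w ∈ Kstar, ‖z - projKs z‖ ≤ ‖z - w‖)
    (θ : ℕ → ℝ) (hθ1 : θ 1 = 1)
    (hθrec : ∀ k, 1 ≤ k → θ (k + 1) = (1 + Real.sqrt (1 + 4 * θ k ^ 2)) / 2)
    (x y : ℕ → EuclideanSpace ℝ (Fin p)) (hx0K : x 0 ∈ Kstar) (hy1 : y 1 = x 0)
    (hxrec : ∀ k, 1 ≤ k → x k = projKs (y k + (1 / Ld) • (-(G (uu (y k))) - g)))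
    (hyrec : ∀ k, 1 ≤ k →
      y (k + 1) = x k + ((θ k - 1) / θ (k + 1)) • (x k - x (k - 1)))
    (xstar : EuclideanSpace ℝ (Fin p)) (hxstar : xstar ∈ Xstar)
    (Rd : ℝ) (hRd : Rd = ‖x 0 - xstar‖)
 :
    ∀ k : ℕ, 1 ≤ k →
      ‖uu (x k) - ustar‖ ≤ Real.sqrt (Ld / σf) * (2 * Rd / ((k : ℝ) + 1)) ∧
      Metric.infDist (G (uu (x k)) + g) K ≤ 2 * Ld * Rd / ((k : ℝ) + 1) ∧
      |f (uu (x k)) - fstar| ≤ (2 * Rd + ‖x 0‖) * (2 * Ld * Rd / ((k : ℝ) + 1)) := by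
  intro k hk
  obtain rfl : Lag = lagrangian f G g := funext fun u => funext (hLag u)
  obtain rfl : d = dualFunction f G g uu := funext hd
  set d := dualFunction f G g uu
  obtain ⟨hustarU, hustarK, -⟩ := hustar
  subst hfstar hXstar hRd hLd
  obtain ⟨hxstarK, hdxstar⟩ := hxstar
  have hfeas : ∀ z ∈ Kstar, 0 ≤ ⟪z, G ustar + g⟫ := fun z hz => (hKstar ▸ hz) _ hustarK
  have hfU := hfsc.subset (subset_univ U) hUcv
  have hL : 0 < ‖G‖ ^ 2 / σf := by have := norm_pos_iff.2 hG; positivity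
  have hxK : ∀ k, x k ∈ Kstar := by
    rintro (_ | k)
    · exact hx0K
    · exact hxrec _ k.succ_pos ▸ (hprojKs _).1
  have hstep : ∀ k, 1 ≤ k → ∀ z ∈ Kstar,
      d z - d (x k) ≤ ‖G‖ ^ 2 / σf / 2 * (‖y k - z‖ ^ 2 - ‖x k - z‖ ^ 2) :=
    fun k hk z hz => hxrec k hk ▸ sub_le_of_projected_gradient_step
      (hKstar ▸ convex_setOf_forall_inner_nonneg K) hL (dualFunction_le_add_inner huu)
      (add_inner_sub_le_dualFunction hσf hfU huu) (hprojKs _).1 (hprojKs _).2 hz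
  have hmax : ∀ z ∈ Kstar, d z ≤ d xstar := fun z hz => by
    linarith [dualFunction_add_inner_le huu hustarU z, hfeas z hz]
  have hgap := fista_gap_le hL.le hθ1 hθrec hstep hxK hxstarK hmax hy1 hyrec hk
  have hdist := fista_norm_sub_le hL hθ1 hθrec hstep hxK hxstarK hmax hy1 hyrec k
  have hr : 0 ≤ 2 * ‖x 0 - xstar‖ / ((k : ℝ) + 1) := by positivity
  rw [hdxstar] at hgap
  have hGv := norm_map_sub_le_of_dualFunction_gap hσf hfU huu hustarU (hfeas _ (hxK k)) hr hgap
  refine ⟨norm_sub_le_of_dualFunction_gap hσf hfU huu hustarU (hfeas _ (hxK k)) hr hgap,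
    (infDist_le_norm_map_sub hustarK _).trans (hGv.trans_eq (by ring)), ?_⟩
  have hxstar_norm : ‖xstar‖ ≤ ‖x 0‖ + ‖x 0 - xstar‖ := norm_le_norm_add_norm_sub _ _
  have hxk_norm : ‖x k‖ ≤ ‖xstar‖ + ‖x k - xstar‖ := norm_le_norm_add_norm_sub' _ _
  refine (abs_sub_le_mul_norm_of_dualFunction_eq huu hustarU hdxstar (hfeas _ hxstarK)
    (B := 2 * ‖x 0 - xstar‖ + ‖x 0‖) (by linarith)
    (by linarith [norm_nonneg (x 0 - xstar)])).trans ?_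
  exact (mul_le_mul_of_nonneg_left hGv (by positivity)).trans_eq (by ring)

theorem stmt_10 {n p : ℕ}
    (f : EuclideanSpace ℝ (Fin n) → ℝ) (σf : ℝ) (hσf : 0 < σf)
    (hfc : Continuous f) (hfsc : StrongConvexOn Set.univ σf f)
    (U : Set (EuclideanSpace ℝ (Fin n))) (hUne : U.Nonempty) (hUcl : IsClosed U) (hUcv : Convex ℝ U)
    (G : EuclideanSpace ℝ (Fin n) →L[ℝ] EuclideanSpace ℝ (Fin p)) (hG : G ≠ 0) (g : EuclideanSpace ℝ (Fin p))
    (K : Set (EuclideanSpace ℝ (Fin p))) (hKne : K.Nonempty) (hKcl : IsClosed K) (hKcv : Convex ℝ K)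
    (hKcone : ∀ c : ℝ, 0 ≤ c → ∀ v ∈ K, c • v ∈ K)
    (Kstar : Set (EuclideanSpace ℝ (Fin p)))
    (hKstar : Kstar = {x : EuclideanSpace ℝ (Fin p) | ∀ v ∈ K, 0 ≤ ⟪x, v⟫})
    (Lag : EuclideanSpace ℝ (Fin n) → EuclideanSpace ℝ (Fin p) → ℝ)
    (hLag : ∀ u x, Lag u x = f u + ⟪x, -(G u) - g⟫)
    (uu : EuclideanSpace ℝ (Fin p) → EuclideanSpace ℝ (Fin n))
    (huu : ∀ x : EuclideanSpace ℝ (Fin p), uu x ∈ U ∧ ∀ u ∈ U, Lag (uu x) x ≤ Lag u x)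
    (d : EuclideanSpace ℝ (Fin p) → ℝ) (hd : ∀ x, d x = Lag (uu x) x)
    (ustar : EuclideanSpace ℝ (Fin n))
    (hustar : ustar ∈ U ∧ G ustar + g ∈ K ∧ ∀ u ∈ U, G u + g ∈ K → f ustar ≤ f u)
    (fstar : ℝ) (hfstar : fstar = f ustar)
    (Xstar : Set (EuclideanSpace ℝ (Fin p))) (hXstar : Xstar = {x ∈ Kstar | d x = fstar})
    (hXne : Xstar.Nonempty)
    (Ld : ℝ) (hLd : Ld = ‖G‖ ^ 2 / σf)
    (projKs : EuclideanSpace ℝ (Fin p) → EuclideanSpace ℝ (Fin p))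
    (hprojKs : ∀ z : EuclideanSpace ℝ (Fin p), projKs z ∈ Kstar ∧ ∀ w ∈ Kstar, ‖z - projKs z‖ ≤ ‖z - w‖)
    (θ : ℕ → ℝ) (hθ0 : θ 0 = 0) (hθ1 : θ 1 = 1)
    (hθrec : ∀ k, 1 ≤ k → θ (k + 1) = (1 + Real.sqrt (1 + 4 * θ k ^ 2)) / 2)
    (x y : ℕ → EuclideanSpace ℝ (Fin p)) (hx0K : x 0 ∈ Kstar) (hy1 : y 1 = x 0)
    (hxrec : ∀ k, 1 ≤ k → x k = projKs (y k + (1 / Ld) • (-(G (uu (y k))) - g)))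
    (hyrec : ∀ k, 1 ≤ k →
      y (k + 1) = x k + ((θ k - 1) / θ (k + 1)) • (x k - x (k - 1)))
    (xstar : EuclideanSpace ℝ (Fin p)) (hxstar : xstar ∈ Xstar)
    (hxstarmin : ∀ z ∈ Xstar, ‖x 0 - xstar‖ ≤ ‖x 0 - z‖)
    (Rd : ℝ) (hRd : Rd = ‖x 0 - xstar‖)
 :
    ∀ k : ℕ, 1 ≤ k →
      ‖uu (x k) - ustar‖ ≤ Real.sqrt (Ld / σf) * (2 * Rd / ((k : ℝ) + 1)) ∧
      Metric.infDist (G (uu (x k)) + g) K ≤ 2 * Ld * Rd / ((k : ℝ) + 1) ∧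
      |f (uu (x k)) - fstar| ≤ (2 * Rd + ‖x 0‖) * (2 * Ld * Rd / ((k : ℝ) + 1)) :=
  stmt_10_general f σf hσf hfsc U hUcv G hG g K Kstar hKstar Lag hLag uu huu d hd ustar hustar fstar
    hfstar Xstar hXstar Ld hLd projKs hprojKs θ hθ1 hθrec x y hx0K hy1 hxrec hyrec xstar hxstar Rd
    hRd
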